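/- Let λ > 0, μ > 0 and let i < j be positive integers. For positive integers k, l write Φ(k,l) := ∫∫ φ(x − y) d(Gamma(k,λ))(x) d(Gamma(l,μ))(y). Then for every convex, monotone increasing function φ : ℝ → ℝ such that (x,y) ↦ φ(x−y) is integrable with respect to Gamma(k,λ) ⊗ Gamma(l,μ) for k, l ∈ {i, j}: Φ(i,i) + Φ(j,j) ≤ Φ(i,j) + Φ(j,i). -/

import Mathlib

/-!
For `i < j` the ratio of the densities of `Gamma(j, r)` and `Gamma(i, r)` is increasing, so the
two densities cross exactly once and `∫ G ∂Gamma(i, r) ≤ ∫ G ∂Gamma(j, r)` for every increasing `G`.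
Convexity of `φ` makes `y ↦ φ (x - y) - φ (x' - y)` increasing when `x ≤ x'`; applied with
`r = μ`, this shows that `x ↦ E φ(x - Y_i) - E φ(x - Y_j)` is increasing, and applying the
comparison once more with `r = λ` gives the inequality after Fubini.
-/

open MeasureTheory ProbabilityTheory Real

theorem ConvexOn.map_add_sub_le {s : Set ℝ} {φ : ℝ → ℝ} (hφ : ConvexOn ℝ s φ) {a b c : ℝ}
    (ha : a ∈ s) (hc : c ∈ s) (hab : a ≤ b) (hbc : b ≤ c) :
    φ b + φ (a + c - b) ≤ φ a + φ c := by
  rcases hab.eq_or_lt with rfl | hab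
  · simp
  set t := (c - b) / (c - a)
  have hca : 0 < c - a := by linarith
  have ht : t * (c - a) = c - b := div_mul_cancel₀ _ hca.ne'
  have ht₀ : 0 ≤ t := div_nonneg (by linarith) hca.le
  have ht₁ : t ≤ 1 := (div_le_one hca).2 (by linarith)
  have hb := hφ.2 ha hc ht₀ (sub_nonneg.2 ht₁) (add_sub_cancel t 1)
  have hb' := hφ.2 ha hc (sub_nonneg.2 ht₁) ht₀ (sub_add_cancel 1 t)
  simp only [smul_eq_mul] at hb hb'
  rw [show t * a + (1 - t) * c = b by linear_combination -ht] at hb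
  rw [show (1 - t) * a + t * c = a + c - b by linear_combination ht] at hb'
  linarith

theorem ConvexOn.monotone_map_sub_sub_map_sub {φ : ℝ → ℝ} (hφ : ConvexOn ℝ Set.univ φ)
    {x x' : ℝ} (hx : x ≤ x') : Monotone fun y => φ (x - y) - φ (x' - y) := by
  intro y y' hy
  have h := hφ.map_add_sub_le (Set.mem_univ (x - y')) (Set.mem_univ (x' - y))
    (b := x - y) (by linarith) (by linarith)
  rw [show x - y' + (x' - y) - (x - y) = x' - y' by ring] at h
  dsimp only
  linarith

theorem ConvexOn.abs_map_sub_sub_map_sub_le {φ : ℝ → ℝ} (hφ : ConvexOn ℝ Set.univ φ)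
    (hmono : Monotone φ) (x x' : ℝ) {y : ℝ} (hy : 0 ≤ y) :
    |φ (x - y) - φ (x' - y)| ≤ |φ x - φ x'| := by
  wlog hx : x ≤ x' generalizing x x'
  · rw [abs_sub_comm, abs_sub_comm (φ x)]
    exact this x' x (le_of_not_ge hx)
  have h₀ := hφ.monotone_map_sub_sub_map_sub hx hy
  have h₁ : φ (x - y) ≤ φ (x' - y) := hmono (by linarith)
  simp only [sub_zero] at h₀
  rw [abs_of_nonpos (by linarith), abs_of_nonpos (by linarith)]
  linarith

theorem ConvexOn.integrable_map_sub_of_integrable {φ : ℝ → ℝ} (hφ : ConvexOn ℝ Set.univ φ)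
    (hmono : Monotone φ) {μ : Measure ℝ} [IsFiniteMeasure μ] (hμ : ∀ᵐ y ∂μ, 0 ≤ y) {x₀ : ℝ}
    (h : Integrable (fun y => φ (x₀ - y)) μ) (x : ℝ) :
    Integrable (fun y => φ (x - y)) μ := by
  have hbdd : Integrable (fun y => φ (x - y) - φ (x₀ - y)) μ := by
    have := hmono.measurable
    refine Integrable.of_bound (by fun_prop) |φ x - φ x₀| ?_
    filter_upwards [hμ] with y hy
    exact hφ.abs_map_sub_sub_map_sub_le hmono x x₀ hy
  exact (hbdd.add h).congr (.of_forall fun y => sub_add_cancel _ _)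

theorem integral_mul_le_integral_mul_of_crossing {α : Type*} [LinearOrder α] [MeasurableSpace α]
    {μ : Measure α} {f g G : α → ℝ} (c : α) (hG : Monotone G)
    (hleft : ∀ x ≤ c, g x ≤ f x) (hright : ∀ x, c ≤ x → f x ≤ g x)
    (hmass : ∫ x, f x ∂μ = ∫ x, g x ∂μ) (hf : Integrable f μ) (hg : Integrable g μ)
    (hfG : Integrable (fun x => f x * G x) μ) (hgG : Integrable (fun x => g x * G x) μ) :
    ∫ x, f x * G x ∂μ ≤ ∫ x, g x * G x ∂μ := by
  have hpos : 0 ≤ ∫ x, (g x - f x) * (G x - G c) ∂μ := by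
    refine integral_nonneg fun x => ?_
    rcases le_total x c with hx | hx
    · exact mul_nonneg_of_nonpos_of_nonpos (sub_nonpos.2 (hleft x hx)) (sub_nonpos.2 (hG hx))
    · exact mul_nonneg (sub_nonneg.2 (hright x hx)) (sub_nonneg.2 (hG hx))
  have hsplit : ∫ x, (g x - f x) * (G x - G c) ∂μ
      = (∫ x, g x * G x ∂μ - ∫ x, f x * G x ∂μ) - (∫ x, g x ∂μ - ∫ x, f x ∂μ) * G c := by
    have h := integral_sub (hgG.sub hfG) ((hg.sub hf).mul_const (G c))
    simp only [Pi.sub_apply] at h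
    rw [integral_sub hgG hfG, integral_mul_const, integral_sub hg hf] at h
    rw [← h]
    congr 1 with x
    ring
  rwa [hsplit, hmass, sub_self, zero_mul, sub_zero, sub_nonneg] at hpos

theorem measurable_gammaPDF (a r : ℝ) : Measurable (gammaPDF a r) :=
  (measurable_gammaPDFReal a r).ennreal_ofReal

theorem gammaMeasure_ae_nonneg (a r : ℝ) : ∀ᵐ x ∂gammaMeasure a r, 0 ≤ x := by
  rw [gammaMeasure, ae_withDensity_iff (measurable_gammaPDF a r)]
  filter_upwards with x hx
  by_contra h
  exact hx (gammaPDF_of_neg (not_le.1 h))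

theorem integrable_gammaMeasure_iff {a r : ℝ} (ha : 0 < a) (hr : 0 < r) {g : ℝ → ℝ} :
    Integrable g (gammaMeasure a r) ↔ Integrable (fun x => gammaPDFReal a r x * g x) := by
  rw [gammaMeasure, integrable_withDensity_iff_integrable_smul'
    (measurable_gammaPDF a r) (.of_forall fun _ => ENNReal.ofReal_lt_top)]
  simp only [gammaPDF, ENNReal.toReal_ofReal (gammaPDFReal_nonneg ha hr _), smul_eq_mul]

theorem integral_gammaMeasure {a r : ℝ} (ha : 0 < a) (hr : 0 < r) (g : ℝ → ℝ) :
    ∫ x, g x ∂gammaMeasure a r = ∫ x, gammaPDFReal a r x * g x := by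
  rw [gammaMeasure, integral_withDensity_eq_integral_toReal_smul
    (measurable_gammaPDF a r) (.of_forall fun _ => ENNReal.ofReal_lt_top)]
  simp only [gammaPDF, ENNReal.toReal_ofReal (gammaPDFReal_nonneg ha hr _), smul_eq_mul]

theorem integrable_gammaPDFReal {a r : ℝ} (ha : 0 < a) (hr : 0 < r) :
    Integrable (gammaPDFReal a r) := by
  have := isProbabilityMeasure_gammaMeasure ha hr
  simpa using (integrable_gammaMeasure_iff ha hr).1 (integrable_const (1 : ℝ))

theorem integral_gammaPDFReal {a r : ℝ} (ha : 0 < a) (hr : 0 < r) :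
    ∫ x, gammaPDFReal a r x = 1 := by
  have := isProbabilityMeasure_gammaMeasure ha hr
  simpa using (integral_gammaMeasure ha hr fun _ => 1).symm

theorem gammaPDFReal_natCast_add {n : ℕ} (hn : 1 ≤ n) (m : ℕ) (r x : ℝ) :
    gammaPDFReal (n + m : ℕ) r x
      = gammaPDFReal n r x * ((r * x) ^ m * Gamma n / Gamma (n + m : ℕ)) := by
  obtain ⟨k, rfl⟩ : ∃ k, n = k + 1 := ⟨n - 1, by omega⟩
  have hΓ : Gamma (k + 1 : ℕ) ≠ 0 := (Gamma_pos_of_pos (by positivity)).ne'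
  have hΓ' : Gamma (k + 1 + m : ℕ) ≠ 0 := (Gamma_pos_of_pos (by positivity)).ne'
  unfold gammaPDFReal
  split_ifs
  · rw [show ((k + 1 + m : ℕ) : ℝ) - 1 = ((k + m : ℕ) : ℝ) by push_cast; ring,
      show ((k + 1 : ℕ) : ℝ) - 1 = (k : ℕ) by push_cast; ring]
    simp only [rpow_natCast]
    field_simp
    ring
  · simp

theorem exists_gammaPDFReal_natCast_crossing {i j : ℕ} (hi : 1 ≤ i) (hij : i < j) {r : ℝ}
    (hr : 0 < r) : ∃ c, (∀ x ≤ c, gammaPDFReal j r x ≤ gammaPDFReal i r x) ∧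
      ∀ x, c ≤ x → gammaPDFReal i r x ≤ gammaPDFReal j r x := by
  obtain ⟨m, rfl⟩ : ∃ m, j = i + m := ⟨j - i, by omega⟩
  have hΓi : 0 < Gamma i := Gamma_pos_of_pos (by exact_mod_cast hi)
  have hΓj : 0 < Gamma (i + m : ℕ) := Gamma_pos_of_pos (by positivity)
  have hpdf := gammaPDFReal_nonneg (Nat.cast_pos.2 hi) hr
  -- the density ratio `(r x) ^ m * Γ(i) / Γ(i + m)` is increasing on `[0, ∞)` and equals `1` at `c`
  obtain ⟨c, hc₀, hc⟩ : ∃ c, 0 < c ∧ (r * c) ^ m = Gamma (i + m : ℕ) / Gamma i :=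
    ⟨(Gamma (i + m : ℕ) / Gamma i) ^ (m⁻¹ : ℝ) / r, by positivity, by
      rw [mul_div_cancel₀ _ hr.ne', rpow_inv_natCast_pow (by positivity) (by omega)]⟩
  refine ⟨c, fun x hx => ?_, fun x hx => ?_⟩ <;> rw [gammaPDFReal_natCast_add hi m]
  · rcases lt_or_ge x 0 with hx₀ | hx₀
    · simp [gammaPDFReal, not_le.2 hx₀]
    refine mul_le_of_le_one_right (hpdf x) ?_
    rw [div_le_one hΓj, ← le_div_iff₀ hΓi, ← hc]
    gcongr
  · refine le_mul_of_one_le_right (hpdf x) ?_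
    rw [one_le_div hΓj, ← div_le_iff₀ hΓi, ← hc]
    gcongr

theorem Monotone.integral_gammaMeasure_natCast_le {G : ℝ → ℝ} (hG : Monotone G) {i j : ℕ}
    (hi : 1 ≤ i) (hij : i ≤ j) {r : ℝ} (hr : 0 < r) (hGi : Integrable G (gammaMeasure i r))
    (hGj : Integrable G (gammaMeasure j r)) :
    ∫ x, G x ∂gammaMeasure i r ≤ ∫ x, G x ∂gammaMeasure j r := by
  rcases hij.eq_or_lt with rfl | hij
  · exact le_rfl
  obtain ⟨c, hleft, hright⟩ := exists_gammaPDFReal_natCast_crossing hi hij hr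
  have hi₀ : (0 : ℝ) < i := Nat.cast_pos.2 hi
  have hj₀ : (0 : ℝ) < j := Nat.cast_pos.2 (by omega)
  rw [integral_gammaMeasure hi₀ hr, integral_gammaMeasure hj₀ hr]
  exact integral_mul_le_integral_mul_of_crossing c hG hleft hright
    (by rw [integral_gammaPDFReal hi₀ hr, integral_gammaPDFReal hj₀ hr])
    (integrable_gammaPDFReal hi₀ hr) (integrable_gammaPDFReal hj₀ hr)
    ((integrable_gammaMeasure_iff hi₀ hr).1 hGi) ((integrable_gammaMeasure_iff hj₀ hr).1 hGj)

theorem ConvexOn.monotone_integral_gammaMeasure_sub_integral_gammaMeasure {φ : ℝ → ℝ}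
    (hφ : ConvexOn ℝ Set.univ φ) {i j : ℕ} (hi : 1 ≤ i) (hij : i ≤ j) {r : ℝ} (hr : 0 < r)
    (hφi : ∀ x, Integrable (fun y => φ (x - y)) (gammaMeasure i r))
    (hφj : ∀ x, Integrable (fun y => φ (x - y)) (gammaMeasure j r)) :
    Monotone fun x => ∫ y, φ (x - y) ∂gammaMeasure i r - ∫ y, φ (x - y) ∂gammaMeasure j r := by
  intro x x' hx
  have h := (hφ.monotone_map_sub_sub_map_sub hx).integral_gammaMeasure_natCast_le hi hij hr
    ((hφi x).sub (hφi x')) ((hφj x).sub (hφj x'))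
  rw [integral_sub (hφi x) (hφi x'), integral_sub (hφj x) (hφj x')] at h
  linarith

/-- Submodularity on the diagonal: for independent Erlang variables
`X_k ~ Erlang(k,λ)`, `Y_l ~ Erlang(l,μ)` and an increasing convex `φ`,
`Φ(i,i) + Φ(j,j) ≤ Φ(i,j) + Φ(j,i)` for `i < j`, where `Φ(k,l) = E[φ(X_k - Y_l)]`. -/
theorem erlang_submodularity
    (lam mu : ℝ) (hlam : 0 < lam) (hmu : 0 < mu)
    (i j : ℕ) (hi : 1 ≤ i) (hij : i < j)
    (φ : ℝ → ℝ) (hconv : ConvexOn ℝ Set.univ φ) (hmono : Monotone φ)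
    (hint : ∀ k ∈ ({i, j} : Finset ℕ), ∀ l ∈ ({i, j} : Finset ℕ),
      Integrable (fun p : ℝ × ℝ => φ (p.1 - p.2))
        ((gammaMeasure (k : ℝ) lam).prod (gammaMeasure (l : ℝ) mu))) :
    (∫ p : ℝ × ℝ, φ (p.1 - p.2) ∂((gammaMeasure (i : ℝ) lam).prod (gammaMeasure (i : ℝ) mu))) +
      (∫ p : ℝ × ℝ, φ (p.1 - p.2) ∂((gammaMeasure (j : ℝ) lam).prod (gammaMeasure (j : ℝ) mu))) ≤
    (∫ p : ℝ × ℝ, φ (p.1 - p.2) ∂((gammaMeasure (i : ℝ) lam).prod (gammaMeasure (j : ℝ) mu))) +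
      ∫ p : ℝ × ℝ, φ (p.1 - p.2) ∂((gammaMeasure (j : ℝ) lam).prod (gammaMeasure (i : ℝ) mu)) := by
  have hi₀ : (0 : ℝ) < i := Nat.cast_pos.2 hi
  have hj₀ : (0 : ℝ) < j := Nat.cast_pos.2 (by omega)
  have := isProbabilityMeasure_gammaMeasure hi₀ hlam
  have := isProbabilityMeasure_gammaMeasure hj₀ hlam
  have := isProbabilityMeasure_gammaMeasure hi₀ hmu
  have := isProbabilityMeasure_gammaMeasure hj₀ hmu
  have hii := hint i (by simp) i (by simp)
  have hij' := hint i (by simp) j (by simp)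
  have hji := hint j (by simp) i (by simp)
  have hjj := hint j (by simp) j (by simp)
  obtain ⟨x₀, hx₀i, hx₀j⟩ := (hii.prod_right_ae.and hij'.prod_right_ae).exists
  have hφ := hconv.monotone_integral_gammaMeasure_sub_integral_gammaMeasure hi hij.le hmu
    (hconv.integrable_map_sub_of_integrable hmono (gammaMeasure_ae_nonneg _ _) hx₀i)
    (hconv.integrable_map_sub_of_integrable hmono (gammaMeasure_ae_nonneg _ _) hx₀j)
  have h := hφ.integral_gammaMeasure_natCast_le hi hij.le hlam
    (hii.integral_prod_left.sub hij'.integral_prod_left)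
    (hji.integral_prod_left.sub hjj.integral_prod_left)
  rw [integral_sub hii.integral_prod_left hij'.integral_prod_left,
    integral_sub hji.integral_prod_left hjj.integral_prod_left] at h
  rw [integral_prod _ hii, integral_prod _ hij', integral_prod _ hji, integral_prod _ hjj]
  linarith
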